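/- arXiv:1403.3758 — 2 statements merged into one kernel-verified Lean document; each statement's English description precedes it below -/
import Mathlib

section
/- The Benjamini–Hochberg procedure controls the false discovery rate: if $p_{(1)} \le \dots \le p_{(m)}$ are ordered p-values of $m$ independent hypotheses of which $m_0$ are true nulls (each true null p-value uniformly distributed on $[0,1]$), and one rejects all hypotheses with $p_{(i)} \le (i/m)\alpha$ for $i \le k$ where $k = \max\{i : p_{(i)} \le (i/m)\alpha\}$, then the expected proportion of false rejections among all rejections is at most $(m_0/m)\alpha \le \alpha$. -/
/-!
Leave-one-out argument. For a true null `i`, let `rᵢ` be the step-up rank computed after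
moving `pᵢ` down to the lowest threshold. It is a function of the other p-values, hence
independent of `pᵢ`, and it equals the number of rejections whenever `i` is rejected. So
`FDP ≤ ∑ᵢ 1{pᵢ ≤ rᵢ α/m} / rᵢ` over the true nulls, and conditionally on `rᵢ` each summand has
mean at most `P(pᵢ ≤ rᵢ α/m) / rᵢ ≤ α/m`.
-/

open MeasureTheory ProbabilityTheory Finset

def stepUpRank (n : ℕ) (c : ℕ → ℕ) : ℕ :=
  ((range (n + 1)).filter (fun j => j ≤ c j)).sup id

section StepUpRank

variable {n : ℕ} {c c' : ℕ → ℕ}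

lemma stepUpRank_mem : stepUpRank n c ∈ (range (n + 1)).filter (fun j => j ≤ c j) := by
  obtain ⟨j, hj, hsup⟩ := exists_mem_eq_sup ((range (n + 1)).filter (fun j => j ≤ c j))
    ⟨0, mem_filter.2 ⟨mem_range.2 n.succ_pos, Nat.zero_le _⟩⟩ id
  rwa [stepUpRank, hsup]

lemma stepUpRank_le : stepUpRank n c ≤ n :=
  Nat.lt_succ_iff.1 <| mem_range.1 (mem_filter.1 stepUpRank_mem).1

lemma stepUpRank_le_apply : stepUpRank n c ≤ c (stepUpRank n c) :=
  (mem_filter.1 stepUpRank_mem).2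

lemma le_stepUpRank {j : ℕ} (hjn : j ≤ n) (hj : j ≤ c j) : j ≤ stepUpRank n c :=
  le_sup (f := id) (mem_filter.2 ⟨mem_range.2 (Nat.lt_succ_of_le hjn), hj⟩)

lemma stepUpRank_mono (h : c ≤ c') : stepUpRank n c ≤ stepUpRank n c' :=
  le_stepUpRank stepUpRank_le (stepUpRank_le_apply.trans (h _))

lemma apply_stepUpRank_eq (hc : Monotone c) (hcn : ∀ j, c j ≤ n) :
    c (stepUpRank n c) = stepUpRank n c :=
  le_antisymm (le_stepUpRank (hcn _) (hc stepUpRank_le_apply)) stepUpRank_le_apply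

lemma stepUpRank_eq_of_le (h : c ≤ c') (heq : ∀ j, stepUpRank n c ≤ j → c' j = c j) :
    stepUpRank n c' = stepUpRank n c := by
  have hle := stepUpRank_mono (n := n) h
  refine le_antisymm (le_stepUpRank stepUpRank_le ?_) hle
  exact heq _ hle ▸ stepUpRank_le_apply

lemma stepUpRank_eq_sup' :
    stepUpRank n c = (range (n + 1)).sup' nonempty_range_add_one
      (fun j => if j ≤ c j then j else 0) := by
  rw [stepUpRank, sup'_eq_sup, sup_ite]
  exact (sup_eq_left.2 (Finset.sup_le fun _ _ => Nat.zero_le _)).symm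

lemma measurable_stepUpRank {Ω : Type*} [MeasurableSpace Ω] {c : ℕ → Ω → ℕ}
    (hc : ∀ j, Measurable (c j)) : Measurable fun ω => stepUpRank n (fun j => c j ω) := by
  simp_rw [stepUpRank_eq_sup']
  exact measurable_range_sup'' fun j _ =>
    Measurable.ite (measurableSet_le measurable_const (hc j)) measurable_const measurable_const

end StepUpRank

section BenjaminiHochberg

variable {ι : Type*} [Fintype ι] (t : ℕ → ℝ) (n : ℕ)

noncomputable def bhRank (q : ι → ℝ) : ℕ := stepUpRank n (fun j => #{i | q i ≤ t j})

noncomputable def bhRejections (q : ι → ℝ) : Finset ι := {i | q i ≤ t (bhRank t n q)}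

variable {t n}

lemma card_bhRejections (ht : Monotone t) (hn : Fintype.card ι ≤ n) (q : ι → ℝ) :
    #(bhRejections t n q) = bhRank t n q := by
  have hmono : Monotone fun j => #({i | q i ≤ t j} : Finset ι) := fun _ _ hjk =>
    card_le_card <| monotone_filter_right _ fun _ _ hi => hi.trans (ht hjk)
  have hbound : ∀ j, #({i | q i ≤ t j} : Finset ι) ≤ n := fun _ =>
    (card_filter_le _ _).trans (by rwa [card_univ])
  exact apply_stepUpRank_eq hmono hbound

lemma bhRank_update_eq [DecidableEq ι] (ht : Monotone t) {q : ι → ℝ} {i : ι}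
    (hi : i ∈ bhRejections t n q) : bhRank t n (Function.update q i (t 0)) = bhRank t n q := by
  have hcount : ∀ j, #{l | Function.update q i (t 0) l ≤ t j} =
      #(insert i ({l | q l ≤ t j} : Finset ι)) := by
    intro j
    congr 1
    ext l
    by_cases hl : l = i <;> simp [hl, ht (Nat.zero_le j)]
  refine stepUpRank_eq_of_le (fun j => (hcount j).symm ▸ card_le_card (subset_insert _ _))
    fun j hj => ?_
  have hij : i ∈ ({l | q l ≤ t j} : Finset ι) :=
    mem_filter.2 ⟨mem_univ _, (mem_filter.1 hi).2.trans (ht hj)⟩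
  rw [hcount, insert_eq_of_mem hij]

lemma measurable_bhRank : Measurable (bhRank t n : (ι → ℝ) → ℕ) := by
  refine measurable_stepUpRank fun j => ?_
  simp_rw [card_filter]
  exact Finset.measurable_sum _ fun i _ => Measurable.ite
    (measurableSet_le (measurable_pi_apply i) measurable_const) measurable_const measurable_const

lemma card_bhRejections_inter_div_le [DecidableEq ι] (ht : Monotone t) (hn : Fintype.card ι ≤ n)
    (q : ι → ℝ) (T : Finset ι) :
    (#(bhRejections t n q ∩ T) : ℝ) / max (#(bhRejections t n q) : ℝ) 1 ≤
      ∑ i ∈ T, if q i ≤ t (bhRank t n (Function.update q i (t 0)))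
        then ((bhRank t n (Function.update q i (t 0)) : ℝ))⁻¹ else 0 := by
  rw [inter_comm, ← filter_mem_eq_inter, card_filter, Nat.cast_sum, sum_div]
  refine sum_le_sum fun i _ => ?_
  by_cases hiR : i ∈ bhRejections t n q
  · have hpos : (1 : ℝ) ≤ #(bhRejections t n q) := by exact_mod_cast card_pos.2 ⟨i, hiR⟩
    rw [bhRank_update_eq ht hiR, if_pos ((mem_filter.1 hiR).2), if_pos hiR, max_eq_left hpos,
      card_bhRejections ht hn, Nat.cast_one, one_div]
  · rw [if_neg hiR, Nat.cast_zero, zero_div]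
    split_ifs <;> positivity

end BenjaminiHochberg

section Probability

variable {Ω : Type*} [MeasurableSpace Ω] {μ : Measure Ω}

lemma measure_preimage_Iic_le_of_map_eq_uniform {U : Ω → ℝ} (hU : Measurable U)
    (hunif : μ.map U = volume.restrict (Set.Icc 0 1)) (x : ℝ) :
    μ (U ⁻¹' Set.Iic x) ≤ ENNReal.ofReal x := by
  rw [← Measure.map_apply hU measurableSet_Iic, hunif, Measure.restrict_apply measurableSet_Iic]
  calc volume (Set.Iic x ∩ Set.Icc 0 1) ≤ volume (Set.Icc 0 x) :=
        measure_mono fun y hy => ⟨hy.2.1, hy.1⟩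
    _ = ENNReal.ofReal x := by rw [Real.volume_Icc, sub_zero]

lemma ProbabilityTheory.iIndepFun.indepFun_update {ι β : Type*} [Fintype ι] [DecidableEq ι]
    [MeasurableSpace β] {f : ι → Ω → β} (hf : iIndepFun f μ) (hmeas : ∀ i, Measurable (f i))
    (i : ι) (b : β) : IndepFun (f i) (fun ω => Function.update (fun j => f j ω) i b) μ := by
  have hupdate : ∀ ω, Function.update (fun j => f j ω) i b =
      Function.updateFinset (fun _ => b) {i}ᶜ fun j : ({i}ᶜ : Finset ι) => f j ω := by
    intro ω
    funext j
    by_cases hj : j = i <;> simp [Function.updateFinset, hj]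
  simp_rw [hupdate]
  exact (hf.indepFun_finset {i} {i}ᶜ disjoint_compl_right hmeas).comp
    (measurable_pi_apply ⟨i, mem_singleton_self i⟩)
    (measurable_updateFinset (X := fun _ => β) (x := fun _ => b))

lemma measurable_ite_le_mul_inv (c : ℝ) :
    Measurable fun z : ℝ × ℕ => if z.1 ≤ c * z.2 then ((z.2 : ℝ))⁻¹ else 0 :=
  Measurable.ite (measurableSet_le measurable_fst (by fun_prop)) (by fun_prop) measurable_const

lemma integrable_ite_le_mul_inv [IsFiniteMeasure μ] {U : Ω → ℝ} {N : Ω → ℕ} (hU : Measurable U)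
    (hN : Measurable N) (c : ℝ) :
    Integrable (fun ω => if U ω ≤ c * N ω then ((N ω : ℝ))⁻¹ else 0) μ := by
  refine .of_bound ((measurable_ite_le_mul_inv c).comp (hU.prodMk hN)).aestronglyMeasurable 1
    (ae_of_all _ fun ω => ?_)
  split_ifs
  · rw [norm_inv, Real.norm_natCast]
    exact Nat.cast_inv_le_one _
  · simp

lemma lintegral_ite_le_mul_inv_le {ν : Measure ℝ}
    (hν : ∀ x, 0 ≤ x → ν (Set.Iic x) ≤ ENNReal.ofReal x) {c : ℝ} (hc : 0 ≤ c) (k : ℕ) :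
    ∫⁻ x, ENNReal.ofReal (if x ≤ c * k then (k : ℝ)⁻¹ else 0) ∂ν ≤ ENNReal.ofReal c := by
  have hind : (fun x => ENNReal.ofReal (if x ≤ c * k then (k : ℝ)⁻¹ else 0)) =
      (Set.Iic (c * k)).indicator fun _ => ENNReal.ofReal (k : ℝ)⁻¹ := by
    ext x
    simp only [Set.indicator_apply, Set.mem_Iic]
    split_ifs <;> simp
  rw [hind, lintegral_indicator_const measurableSet_Iic]
  calc ENNReal.ofReal (k : ℝ)⁻¹ * ν (Set.Iic (c * k))
      ≤ ENNReal.ofReal (k : ℝ)⁻¹ * ENNReal.ofReal (c * k) := by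
        gcongr
        exact hν _ (by positivity)
    _ = ENNReal.ofReal ((k : ℝ)⁻¹ * (c * k)) := (ENNReal.ofReal_mul (by positivity)).symm
    _ ≤ ENNReal.ofReal c := by
        gcongr
        rcases eq_or_ne k 0 with rfl | hk
        · simpa using hc
        · exact (by field_simp : (k : ℝ)⁻¹ * (c * k) = c).le

-- For `N ω = 0` the summand is `0⁻¹ = 0`, so `N` need not be positive.
lemma integral_ite_le_mul_inv_le [IsProbabilityMeasure μ] {U : Ω → ℝ} {N : Ω → ℕ}
    (hU : Measurable U) (hN : Measurable N) (hUN : IndepFun U N μ)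
    (hsuper : ∀ x, 0 ≤ x → μ (U ⁻¹' Set.Iic x) ≤ ENNReal.ofReal x) {c : ℝ} (hc : 0 ≤ c) :
    ∫ ω, (if U ω ≤ c * N ω then ((N ω : ℝ))⁻¹ else 0) ∂μ ≤ c := by
  set g : ℝ × ℕ → ℝ := fun z => if z.1 ≤ c * z.2 then ((z.2 : ℝ))⁻¹ else 0
  have hg := measurable_ite_le_mul_inv c
  have hlint : ∫⁻ ω, ENNReal.ofReal (g (U ω, N ω)) ∂μ ≤ ENNReal.ofReal c := by
    have : IsProbabilityMeasure (μ.map N) := Measure.isProbabilityMeasure_map hN.aemeasurable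
    rw [← lintegral_map hg.ennreal_ofReal (hU.prodMk hN),
      (indepFun_iff_map_prod_eq_prod_map_map hU.aemeasurable hN.aemeasurable).1 hUN,
      lintegral_prod_symm' _ hg.ennreal_ofReal]
    calc ∫⁻ k, ∫⁻ x, ENNReal.ofReal (g (x, k)) ∂(μ.map U) ∂(μ.map N)
        ≤ ∫⁻ _, ENNReal.ofReal c ∂(μ.map N) := lintegral_mono fun k =>
          lintegral_ite_le_mul_inv_le (fun x hx =>
            (Measure.map_apply hU measurableSet_Iic).trans_le (hsuper x hx)) hc k
      _ = ENNReal.ofReal c := by simp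
  have hg0 : ∀ z, 0 ≤ g z := fun z => by dsimp only [g]; split_ifs <;> positivity
  rw [integral_eq_lintegral_of_nonneg_ae (ae_of_all _ fun ω => hg0 _)
    (hg.comp (hU.prodMk hN)).aestronglyMeasurable]
  exact ENNReal.toReal_le_of_le_ofReal hc hlint

end Probability

open MeasureTheory ProbabilityTheory Finset in
open scoped Classical in
theorem benjamini_hochberg_fdr_control_general
    {Ω : Type*} [MeasureSpace Ω] (μP : Measure Ω) [IsProbabilityMeasure μP]
    (m m0 : ℕ) (hm0 : m0 ≤ m)
    (α : ℝ) (hα0 : 0 ≤ α)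
    (p : Fin m → Ω → ℝ) (hmeas : ∀ i, Measurable (p i))
    (hindep : iIndepFun p μP)
    (trueNulls : Finset (Fin m)) (hcard : trueNulls.card = m0)
    (hunif : ∀ i ∈ trueNulls,
      μP.map (p i) = (volume : Measure ℝ).restrict (Set.Icc 0 1))
    (kBH : Ω → ℕ)
    (hk : ∀ ω, kBH ω = ((Finset.range (m + 1)).filter (fun j : ℕ =>
        j ≤ ((Finset.univ.filter (fun i => p i ω ≤ (j : ℝ) * α / m)).card))).sup id)
    (R : Ω → Finset (Fin m))
    (hR : ∀ ω, R ω = Finset.univ.filter (fun i => p i ω ≤ (kBH ω : ℝ) * α / m))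
    (FDP : Ω → ℝ)
    (hFDP : ∀ ω, FDP ω = ((R ω ∩ trueNulls).card : ℝ) / max ((R ω).card : ℝ) 1) :
    (∫ ω, FDP ω ∂μP) ≤ (m0 : ℝ) / m * α ∧ (m0 : ℝ) / m * α ≤ α := by
  set c := α / m
  set t : ℕ → ℝ := fun j => c * j
  have hc : 0 ≤ c := by positivity
  have ht : Monotone t := fun _ _ hjk => by dsimp only [t]; gcongr
  have hRq : ∀ ω, R ω = bhRejections t m (fun i => p i ω) := by
    intro ω
    have htj : ∀ j : ℕ, (j : ℝ) * α / m = t j := fun j => by ring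
    simp only [hR, hk, htj]
    rfl
  set r : Fin m → Ω → ℕ := fun i ω => bhRank t m (Function.update (fun l => p l ω) i (t 0))
  have hr_meas : ∀ i, Measurable (r i) := fun i =>
    measurable_bhRank.comp (measurable_update_left.comp (measurable_pi_lambda _ hmeas))
  set X : Fin m → Ω → ℝ := fun i ω => if p i ω ≤ c * r i ω then ((r i ω : ℝ))⁻¹ else 0
  have hX_int : ∀ i, Integrable (X i) μP := fun i =>
    integrable_ite_le_mul_inv (hmeas i) (hr_meas i) c
  have hX : ∀ i ∈ trueNulls, ∫ ω, X i ω ∂μP ≤ c := fun i hi =>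
    integral_ite_le_mul_inv_le (hmeas i) (hr_meas i)
      ((hindep.indepFun_update hmeas i (t 0)).comp measurable_id measurable_bhRank)
      (fun x _ => measure_preimage_Iic_le_of_map_eq_uniform (hmeas i) (hunif i hi) x) hc
  refine ⟨?_, mul_le_of_le_one_left hα0 (div_le_one_of_le₀ (by exact_mod_cast hm0) m.cast_nonneg)⟩
  calc ∫ ω, FDP ω ∂μP
      ≤ ∫ ω, ∑ i ∈ trueNulls, X i ω ∂μP := by
        refine integral_mono_of_nonneg (ae_of_all _ fun ω => ?_)
          (integrable_finsetSum _ fun i _ => hX_int i) (ae_of_all _ fun ω => ?_)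
        · rw [hFDP]
          positivity
        · rw [hFDP, hRq]
          exact card_bhRejections_inter_div_le ht (Fintype.card_fin m).le _ _
    _ = ∑ i ∈ trueNulls, ∫ ω, X i ω ∂μP :=
        integral_finsetSum _ fun i _ => hX_int i
    _ ≤ ∑ _i ∈ trueNulls, c := sum_le_sum hX
    _ = m0 / m * α := by rw [sum_const, hcard, nsmul_eq_mul]; ring

open MeasureTheory ProbabilityTheory Finset in
open scoped Classical in
/-- The Benjamini–Hochberg step-up procedure controls the false discovery rate:
with `m` independent p-values, `m0` of which correspond to true nulls and are
uniform on `[0,1]`, rejecting all hypotheses with `p i ≤ (k/m)α` where `k` is the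
largest `j` such that at least `j` p-values are `≤ (j/m)α` (equivalently, the largest
`j` with `p_(j) ≤ (j/m)α` for the ordered p-values), the expected proportion of
false rejections among all rejections is at most `(m0/m)α ≤ α`. -/
theorem benjamini_hochberg_fdr_control
    {Ω : Type*} [MeasureSpace Ω] (μP : Measure Ω) [IsProbabilityMeasure μP]
    (m m0 : ℕ) (hm : 0 < m) (hm0 : m0 ≤ m)
    (α : ℝ) (hα0 : 0 ≤ α) (hα1 : α ≤ 1)
    (p : Fin m → Ω → ℝ) (hmeas : ∀ i, Measurable (p i))
    (hindep : iIndepFun p μP)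
    (trueNulls : Finset (Fin m)) (hcard : trueNulls.card = m0)
    (hunif : ∀ i ∈ trueNulls,
      μP.map (p i) = (volume : Measure ℝ).restrict (Set.Icc 0 1))
    (kBH : Ω → ℕ)
    (hk : ∀ ω, kBH ω = ((Finset.range (m + 1)).filter (fun j : ℕ =>
        j ≤ ((Finset.univ.filter (fun i => p i ω ≤ (j : ℝ) * α / m)).card))).sup id)
    (R : Ω → Finset (Fin m))
    (hR : ∀ ω, R ω = Finset.univ.filter (fun i => p i ω ≤ (kBH ω : ℝ) * α / m))
    (FDP : Ω → ℝ)
    (hFDP : ∀ ω, FDP ω = ((R ω ∩ trueNulls).card : ℝ) / max ((R ω).card : ℝ) 1) :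
    (∫ ω, FDP ω ∂μP) ≤ (m0 : ℝ) / m * α ∧ (m0 : ℝ) / m * α ≤ α :=
  benjamini_hochberg_fdr_control_general μP m m0 hm0 α hα0 p hmeas hindep trueNulls hcard hunif kBH
    hk R hR FDP hFDP
end

section
/- Sparse recovery uniqueness via spark: if every set of $2k$ columns of the matrix $A \in \mathbb{R}^{m \times p}$ is linearly independent, then for any $y$ there is at most one vector $x$ with at most $k$ nonzero entries satisfying $Ax = y$. -/
/-! The difference of two `k`-sparse solutions is a `2k`-sparse vector in the kernel of `A`.
Its support can be enlarged to a set of exactly `2k` columns, which are independent, so the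
difference vanishes. -/

open Finset

section

variable {ι R M : Type*} [Fintype ι]

lemma card_filter_sub_ne_zero_le {G : Type*} [DecidableEq ι] [AddGroup G] [DecidableEq G]
    (x y : ι → G) :
    #{i | x i - y i ≠ 0} ≤ #{i | x i ≠ 0} + #{i | y i ≠ 0} := by
  refine (card_le_card fun i hi => ?_).trans (card_union_le _ _)
  simp only [mem_union, mem_filter, mem_univ, true_and] at hi ⊢
  by_contra! h
  exact hi (by rw [h.1, h.2, sub_zero])

variable [Ring R] [AddCommGroup M] [Module R M] {v : ι → M}

lemma linearIndepOn_of_card_le {n : ℕ} (hv : ∀ S : Finset ι, #S = n → LinearIndepOn R v S)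
    (hn : n ≤ Fintype.card ι) {T : Finset ι} (hT : #T ≤ n) : LinearIndepOn R v T := by
  obtain ⟨S, hTS, hS⟩ := exists_superset_card_eq hT hn
  exact (hv S hS).mono (coe_subset.mpr hTS)

lemma LinearIndepOn.eq_zero_of_sum_smul_eq_zero [DecidableEq R] {z : ι → R}
    (hv : LinearIndepOn R v (univ.filter (z · ≠ 0))) (hz : ∑ i, z i • v i = 0) : z = 0 := by
  funext i
  by_contra hi
  have hz' : ∑ j ∈ univ.filter (z · ≠ 0), z j • v j = 0 :=
    (sum_filter_of_ne (p := (z · ≠ 0)) fun j _ hj h => hj (by rw [h, zero_smul])).trans hz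
  exact hi (linearIndepOn_finset_iff.mp hv z hz' i (by simpa [mem_filter] using hi))

end

namespace Matrix

variable {m n R : Type*} [Fintype n] [CommRing R] [DecidableEq R]

lemma eq_zero_of_mulVec_eq_zero_of_card_support_le {A : Matrix m n R} {s : ℕ}
    (hA : ∀ S : Finset n, #S = s → LinearIndepOn R Aᵀ S) (hs : s ≤ Fintype.card n)
    {z : n → R} (hz : A *ᵥ z = 0) (hzs : #{j | z j ≠ 0} ≤ s) : z = 0 := by
  refine (linearIndepOn_of_card_le hA hs hzs).eq_zero_of_sum_smul_eq_zero ?_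
  rw [← hz]
  ext i
  simp [mulVec, dotProduct, mul_comm]

end Matrix

open Matrix in
/-- Sparse recovery uniqueness via spark: if every `2k` columns of `A` are linearly
independent, then a `k`-sparse solution of `A x = y` is unique. -/
theorem sparse_recovery_unique_of_spark (m p k : ℕ) (hkp : 2 * k ≤ p)
    (A : Matrix (Fin m) (Fin p) ℝ)
    (hA : ∀ S : Finset (Fin p), S.card = 2 * k →
      LinearIndependent ℝ (fun j : S => fun i : Fin m => A i (j : Fin p))) :
    ∀ (y : Fin m → ℝ) (x₁ x₂ : Fin p → ℝ),
      A *ᵥ x₁ = y → A *ᵥ x₂ = y →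
      (Finset.univ.filter (fun j => x₁ j ≠ 0)).card ≤ k →
      (Finset.univ.filter (fun j => x₂ j ≠ 0)).card ≤ k →
      x₁ = x₂ := by
  intro y x₁ x₂ h₁ h₂ hx₁ hx₂
  have hker : A *ᵥ (x₁ - x₂) = 0 := by rw [mulVec_sub, h₁, h₂, sub_self]
  have hsparse : #{j | (x₁ - x₂) j ≠ 0} ≤ 2 * k :=
    (card_filter_sub_ne_zero_le x₁ x₂).trans (by omega)
  exact sub_eq_zero.mp <| eq_zero_of_mulVec_eq_zero_of_card_support_le hA
    (by simpa using hkp) hker hsparse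
end
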